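/- Let F be a convex subset of a Hausdorff locally convex topological vector space X with 0 ∈ int(F), and let Ω be a nonempty convex subset of X. Suppose x̄ ∉ cl_F(Ω) and set r := T_Ω^F(x̄) > 0. Then ∂T_Ω^F(x̄) = N(x̄; Ω_r) ∩ S*, where Ω_r := {x | T_Ω^F(x) ≤ r} and S* := {x* ∈ X* | σ_F(−x*) = 1}. -/

import Mathlib

/-!
By convexity of `F`, moving backwards along `s • f` with `f ∈ F` costs at most time `s`:
`T (x - s • f) ≤ s + T x`. For a subgradient `p` at `x₀` this gives `σ_F(-p) ≤ 1`; testing `p` at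
the points `x₀ + t • f ∈ Ω`, where `T` vanishes, gives `r ≤ t * σ_F(-p)` for every admissible time
`t`, hence `σ_F(-p) ≥ 1` after taking the infimum over `t`.
Conversely, let `p ∈ N(x₀; Ω_r)` with `σ_F(-p) = 1`, and let `x + t • f ∈ Ω`. If `t ≥ r`, the point
`x + (t - r) • f` lies in `Ω_r`; if `t < r`, so does `x - (r - t) • g` for every `g ∈ F`. The normal
cone inequality at these points yields `p (x - x₀) ≤ t - r`, and the infimum over `t` gives the
subgradient inequality.
-/

open Set Filter Topology Pointwise

variable {X : Type*} [AddCommGroup X] [Module ℝ X] [TopologicalSpace X]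
  [IsTopologicalAddGroup X] [ContinuousSMul ℝ X] [T2Space X] [LocallyConvexSpace ℝ X]

/-- The set of admissible times in the definition of the minimal time function. -/
def timeSet (F Ω : Set X) (x : X) : Set ℝ := {t : ℝ | 0 < t ∧ ∃ f ∈ F, x + t • f ∈ Ω}

/-- The minimal time function with target Ω and constant dynamics F. -/
noncomputable def minTime (F Ω : Set X) (x : X) : ℝ := sInf (timeSet F Ω x)

/-- The convex subdifferential of the minimal time function at a point. -/
def subdiffMinTime (F Ω : Set X) (x₀ : X) : Set (X →L[ℝ] ℝ) :=
  {p : X →L[ℝ] ℝ | ∀ x : X, p (x - x₀) ≤ minTime F Ω x - minTime F Ω x₀}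

/-- The normal cone to a set A at x₀. -/
def normalCone (A : Set X) (x₀ : X) : Set (X →L[ℝ] ℝ) :=
  {p : X →L[ℝ] ℝ | ∀ x ∈ A, p (x - x₀) ≤ 0}

theorem biSup_coe_eq_coe_iff_isLUB {ι : Type*} (s : Set ι) (g : ι → ℝ) (c : ℝ) :
    (⨆ i ∈ s, (g i : EReal)) = c ↔ IsLUB (g '' s) c := by
  constructor
  · intro h
    refine ⟨?_, fun b hb => ?_⟩
    · rintro _ ⟨i, hi, rfl⟩
      exact EReal.coe_le_coe_iff.1 (h ▸ le_iSup₂ (f := fun i _ => (g i : EReal)) i hi)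
    · refine EReal.coe_le_coe_iff.1 (h ▸ iSup₂_le fun i hi => ?_)
      exact EReal.coe_le_coe_iff.2 (hb ⟨i, hi, rfl⟩)
  · intro h
    refine le_antisymm (iSup₂_le fun i hi => EReal.coe_le_coe_iff.2 (h.1 ⟨i, hi, rfl⟩)) ?_
    refine le_of_forall_lt fun b hb => ?_
    obtain ⟨a, hba, hac⟩ := EReal.lt_iff_exists_real_btwn.1 hb
    obtain ⟨_, ⟨i, hi, rfl⟩, hai⟩ := (lt_isLUB_iff h).1 (EReal.coe_lt_coe_iff.1 hac)
    exact hba.trans_le <| (EReal.coe_le_coe_iff.2 hai.le).trans <|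
      le_iSup₂ (f := fun i _ => (g i : EReal)) i hi

section MinTime

variable {E : Type*} [AddCommGroup E] [Module ℝ E] {F Ω : Set E}

theorem minTime_le {x : E} {t : ℝ} (ht : t ∈ timeSet F Ω x) : minTime F Ω x ≤ t :=
  csInf_le ⟨0, fun _ hs => hs.1.le⟩ ht

theorem minTime_eq_zero_of_mem (h0 : (0 : E) ∈ F) {x : E} (hx : x ∈ Ω) : minTime F Ω x = 0 :=
  le_antisymm (le_of_forall_pos_le_add fun ε hε => by
      simpa using minTime_le ⟨hε, 0, h0, by simpa using hx⟩)
    (Real.sInf_nonneg fun _ ht => ht.1.le)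

theorem minTime_sub_smul_le_add (hF : Convex ℝ F) {f : E} (hf : f ∈ F) {s : ℝ} (hs : 0 ≤ s)
    {x : E} {t : ℝ} (ht : t ∈ timeSet F Ω x) : minTime F Ω (x - s • f) ≤ s + t := by
  obtain ⟨ht0, f', hf', hxt⟩ := ht
  obtain ⟨g, hg, hsg⟩ := hF.exists_mem_add_smul_eq hf hf' hs ht0.le
  refine minTime_le ⟨by linarith, g, hg, ?_⟩
  rwa [hsg, add_comm (s • f), sub_add_add_cancel]

theorem minTime_sub_smul_le (hF : Convex ℝ F) {f : E} (hf : f ∈ F) {s : ℝ} (hs : 0 ≤ s)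
    {x : E} (hx : (timeSet F Ω x).Nonempty) : minTime F Ω (x - s • f) ≤ s + minTime F Ω x := by
  have : minTime F Ω (x - s • f) - s ≤ minTime F Ω x :=
    le_csInf hx fun t ht => sub_le_iff_le_add'.2 (minTime_sub_smul_le_add hF hf hs ht)
  linarith

end MinTime

section Subdifferential

variable {E : Type*} [AddCommGroup E] [Module ℝ E] [TopologicalSpace E] {F Ω : Set E} {x₀ : E}
  {p : E →L[ℝ] ℝ}

theorem timeSet_nonempty [ContinuousSMul ℝ E] (h0 : (0 : E) ∈ interior F) (hΩ : Ω.Nonempty)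
    (x : E) : (timeSet F Ω x).Nonempty := by
  obtain ⟨ω, hω⟩ := hΩ
  have hlim : Tendsto (fun t : ℝ => t⁻¹ • (ω - x)) atTop (𝓝 0) := by
    simpa using (tendsto_inv_atTop_zero (𝕜 := ℝ)).smul_const (ω - x)
  obtain ⟨t, htF, ht1⟩ :=
    ((hlim.eventually_mem (mem_interior_iff_mem_nhds.1 h0)).and (eventually_ge_atTop 1)).exists
  have ht0 : (0 : ℝ) < t := one_pos.trans_le ht1
  refine ⟨t, ht0, t⁻¹ • (ω - x), htF, ?_⟩
  simpa [smul_smul, mul_inv_cancel₀ ht0.ne'] using hω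

theorem subdiffMinTime_subset_normalCone :
    subdiffMinTime F Ω x₀ ⊆ normalCone {x | minTime F Ω x ≤ minTime F Ω x₀} x₀ :=
  fun _ hp x hx => (hp x).trans (sub_nonpos.2 hx)

theorem isLUB_neg_image_of_mem_subdiffMinTime [ContinuousSMul ℝ E] (hF : Convex ℝ F)
    (h0 : (0 : E) ∈ interior F) (hΩ : Ω.Nonempty) (hr : 0 < minTime F Ω x₀)
    (hp : p ∈ subdiffMinTime F Ω x₀) :
    IsLUB ((fun f => -p f) '' F) 1 := by
  set r := minTime F Ω x₀
  have hne := timeSet_nonempty h0 hΩ x₀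
  refine ⟨?_, fun b hb => ?_⟩
  · rintro _ ⟨f, hf, rfl⟩
    have h := hp (x₀ - (1 : ℝ) • f)
    have := minTime_sub_smul_le hF hf zero_le_one hne
    simp only [one_smul, sub_sub_cancel_left, map_neg] at h this
    linarith
  have hrb : ∀ t ∈ timeSet F Ω x₀, r ≤ t * b := by
    rintro t ⟨ht0, f, hf, hxt⟩
    have h := hp (x₀ + t • f)
    rw [minTime_eq_zero_of_mem (interior_subset h0) hxt, add_sub_cancel_left, map_smul,
      smul_eq_mul] at h
    nlinarith [hb ⟨f, hf, rfl⟩]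
  obtain ⟨t, ht⟩ := hne
  have hb0 : 0 < b := pos_of_mul_pos_right (hr.trans_le (hrb t ht)) ht.1.le
  have : r / b ≤ r := le_csInf ⟨t, ht⟩ fun t ht => div_le_of_le_mul₀ hb0.le ht.1.le (hrb t ht)
  rw [div_le_iff₀ hb0] at this
  exact (le_mul_iff_one_le_right hr).1 this

theorem mem_subdiffMinTime_of_mem_normalCone [ContinuousSMul ℝ E] (hF : Convex ℝ F)
    (h0 : (0 : E) ∈ interior F) (hΩ : Ω.Nonempty) (hr : 0 < minTime F Ω x₀)
    (hN : p ∈ normalCone {x | minTime F Ω x ≤ minTime F Ω x₀} x₀)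
    (hS : IsLUB ((fun f => -p f) '' F) 1) : p ∈ subdiffMinTime F Ω x₀ := by
  set r := minTime F Ω x₀
  intro x
  suffices h : ∀ t ∈ timeSet F Ω x, p (x - x₀) ≤ t - r by
    have : p (x - x₀) + r ≤ minTime F Ω x :=
      le_csInf (timeSet_nonempty h0 hΩ x) fun t ht => le_sub_iff_add_le.1 (h t ht)
    linarith
  intro t ht
  obtain ⟨ht0, f, hf, hxt⟩ := ht
  rcases le_or_gt r t with hrt | htr
  · have hu : minTime F Ω (x + (t - r) • f) ≤ r :=
      minTime_le ⟨hr, f, hf, by rwa [add_assoc, ← add_smul, sub_add_cancel]⟩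
    have h := hN _ hu
    rw [add_sub_right_comm, map_add, map_smul, smul_eq_mul] at h
    nlinarith [hS.1 ⟨f, hf, rfl⟩]
  · have hrt : 0 < r - t := sub_pos.2 htr
    suffices hub : -p (x - x₀) / (r - t) ∈ upperBounds ((fun f => -p f) '' F) by
      have := hS.2 hub
      rw [le_div_iff₀ hrt] at this
      linarith
    rintro _ ⟨g, hg, rfl⟩
    have h := hN _ (show minTime F Ω (x - (r - t) • g) ≤ r by
      simpa using minTime_sub_smul_le_add hF hg hrt.le ⟨ht0, f, hf, hxt⟩)
    rw [sub_right_comm, map_sub, map_smul, smul_eq_mul] at h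
    rw [le_div_iff₀ hrt]
    linarith

end Subdifferential

theorem subdiff_minTime_outside_general (F Ω : Set X) (hconv : Convex ℝ F)
    (h0 : (0 : X) ∈ interior F) (hΩne : Ω.Nonempty) (x₀ : X)
    (hr : 0 < minTime F Ω x₀) :
    subdiffMinTime F Ω x₀ =
      normalCone {x : X | minTime F Ω x ≤ minTime F Ω x₀} x₀ ∩
        {p : X →L[ℝ] ℝ | (⨆ f ∈ F, (↑(-(p f)) : EReal)) = 1} := by
  ext p
  rw [mem_inter_iff, mem_ofPred_eq, ← EReal.coe_one,
    biSup_coe_eq_coe_iff_isLUB F (fun f => -p f)]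
  exact ⟨fun hp => ⟨subdiffMinTime_subset_normalCone hp,
      isLUB_neg_image_of_mem_subdiffMinTime hconv h0 hΩne hr hp⟩,
    fun ⟨hN, hS⟩ => mem_subdiffMinTime_of_mem_normalCone hconv h0 hΩne hr hN hS⟩

/-- Subdifferential of the minimal time function outside the F-closure of the target:
∂T_Ω^F(x̄) = N(x̄; Ω_r) ∩ S*, where r = T_Ω^F(x̄), Ω_r is the r-expansion of Ω,
and S* = {x* | σ_F(−x*) = 1}. -/
theorem subdiff_minTime_outside (F Ω : Set X) (hconv : Convex ℝ F)
    (h0 : (0 : X) ∈ interior F) (hΩne : Ω.Nonempty) (hΩ : Convex ℝ Ω) (x₀ : X)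
    (hx₀ : x₀ ∉ {y : X | ∀ ε : ℝ, 0 < ε → ∃ ω ∈ Ω, ∃ f ∈ F, y = ω - ε • f})
    (hr : 0 < minTime F Ω x₀) :
    subdiffMinTime F Ω x₀ =
      normalCone {x : X | minTime F Ω x ≤ minTime F Ω x₀} x₀ ∩
        {p : X →L[ℝ] ℝ | (⨆ f ∈ F, (↑(-(p f)) : EReal)) = 1} :=
  subdiff_minTime_outside_general F Ω hconv h0 hΩne x₀ hr
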